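/- For all integers k_1 >= k_2 >= 0, the minimum number of crossings among all doubly-anchored open semi-meanders lying in the genus-zero stratum Q(k_1, k_2, -1^{k_1+k_2+4}) is exactly k_1 + k_2 + 2. -/

import Mathlib

/-!
Combinatorial model of meanders.  The crossings of a meander with a horizontal
line are the points `0, 1, …` of a `Fin` type, read along the line.  The arcs of
the transversal curve lying above (resp. below) the line form a noncrossing
partial matching of the crossings, encoded as an involutive permutation whose
fixed points are the unmatched (free) points.  A complementary region of the
configuration directly below an arc having `c` directly nested children arcs and
`t` free (anchored) ends inside it is a `(2(c+t-1)+4)`-gon, hence corresponds to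
a zero of order `c+t-1`; the outer region on one side of the line with `T`
top-level arcs and `s` uncovered free ends is a `(2(T+s-2)+4)`-gon, a zero of
order `T+s-2`.  Zeros of order `0` are square regions (regular points) and zeros
of order `-1` are bigons (simple poles).
-/

namespace PaperMeanders

/-- `i` is the left endpoint of an arc of the partial matching `f`. -/
def IsArc {m : ℕ} (f : Equiv.Perm (Fin m)) (i : Fin m) : Prop := i < f i

/-- The arc with left endpoint `i` covers the point `p`. -/
def Covers {m : ℕ} (f : Equiv.Perm (Fin m)) (i p : Fin m) : Prop :=
  IsArc f i ∧ i < p ∧ p < f i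

/-- The arc with left endpoint `j` strictly contains the arc with left endpoint `i`. -/
def Nests {m : ℕ} (f : Equiv.Perm (Fin m)) (j i : Fin m) : Prop :=
  IsArc f j ∧ IsArc f i ∧ j < i ∧ f i < f j

/-- The arc `i` is nested directly inside the arc `j` (no arc strictly between). -/
def DirectChild {m : ℕ} (f : Equiv.Perm (Fin m)) (j i : Fin m) : Prop :=
  Nests f j i ∧ ∀ a, Nests f j a → ¬ Nests f a i

/-- `p` is a free (unmatched) point of the matching. -/
def IsFree {m : ℕ} (f : Equiv.Perm (Fin m)) (p : Fin m) : Prop := f p = p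

/-- The free end `p` lies in the region directly below the arc `i`,
i.e. `i` is the innermost arc covering `p`. -/
def FreeEndUnder {m : ℕ} (f : Equiv.Perm (Fin m)) (i p : Fin m) : Prop :=
  IsFree f p ∧ Covers f i p ∧ ∀ b, Covers f b p → ¬ Nests f i b

/-- The arc `i` is a top-level arc of the matching. -/
def IsTop {m : ℕ} (f : Equiv.Perm (Fin m)) (i : Fin m) : Prop :=
  IsArc f i ∧ ∀ j, ¬ Nests f j i

/-- The free end `p` is covered by no arc: it lies in the outer region. -/
def FreeEndOutside {m : ℕ} (f : Equiv.Perm (Fin m)) (p : Fin m) : Prop :=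
  IsFree f p ∧ ∀ b, ¬ Covers f b p

/-- The matching `f` is noncrossing (its arcs are pairwise disjoint or nested). -/
def Noncrossing {m : ℕ} (f : Equiv.Perm (Fin m)) : Prop :=
  ¬ ∃ i j : Fin m, i < j ∧ j < f i ∧ f i < f j

/-- The order of the zero carried by the complementary region directly below the
arc `i`. -/
noncomputable def arcOrder {m : ℕ} (f : Equiv.Perm (Fin m)) (i : Fin m) : ℤ :=
  (Nat.card {j // DirectChild f i j} : ℤ) + (Nat.card {p // FreeEndUnder f i p} : ℤ) - 1

/-- The order of the zero carried by the outer complementary region on this side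
of the line. -/
noncomputable def outerOrder {m : ℕ} (f : Equiv.Perm (Fin m)) : ℤ :=
  (Nat.card {i // IsTop f i} : ℤ) + (Nat.card {p // FreeEndOutside f p} : ℤ) - 2

/-- The multiset of the orders of the complementary regions below the arcs of `f`. -/
noncomputable def arcOrders {m : ℕ} (f : Equiv.Perm (Fin m)) : Multiset ℤ :=
  (Finset.univ.filter (fun i : Fin m => i < f i)).val.map (arcOrder f)

/-- The multiset of the orders of all complementary regions on one side of the line. -/
noncomputable def faceOrders {m : ℕ} (f : Equiv.Perm (Fin m)) : Multiset ℤ :=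
  outerOrder f ::ₘ arcOrders f

/-- A configuration whose complementary regions and anchor points carry the
multiset `orders` of zero orders lies in the genus-zero stratum `Q(K)`:
the nonzero orders agree with the nonzero entries of `K`, and every zero of
order `0` listed in `K` is realised by a square region (further unmarked square
regions are allowed). -/
def MatchesStratum (orders K : Multiset ℤ) : Prop :=
  orders.filter (· ≠ 0) = K.filter (· ≠ 0) ∧ K.count 0 ≤ orders.count 0

/-- The crossing carried by a half-edge position.  Cutting the sphere open along
the anchored horizontal ray (an arc from the finite end-point `P₁` through the
crossings `1, …, n` to the anchored infinite end `P₂`) produces a disk; its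
boundary carries the `2n` transversal half-edges in the linear order
`n⁻, …, 1⁻, 1⁺, …, n⁺` (positions `0, …, 2n-1`), where `i⁻` and `i⁺` are the two
half-edges of the transversal at the crossing `i`.  Arcs of the transversal are
chords of this disk; a chord joining the two blocks passes around the end-point
of the ray. -/
def crossingOf (n : ℕ) (p : Fin (2 * n)) : ℕ :=
  if (p : ℕ) < n then n - 1 - (p : ℕ) else (p : ℕ) - n

/-- A doubly-anchored open semi-meander: a horizontal ray anchored at its finite
end-point and at infinity, together with a transversal arc anchored at two
punctures, crossing the ray transversally at `n` points and allowed to pass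
around the end-point of the ray.  In the cut-open (disk) picture the transversal
arcs form a noncrossing partial matching of the `2n` half-edge positions with
exactly two free (anchored) ends, gluing up into a single arc through all the
crossings. -/
structure DoublyAnchoredOpenSemiMeander where
  /-- the number of crossings -/
  n : ℕ
  /-- the noncrossing matching of the half-edge positions by the transversal arcs -/
  arcs : Equiv.Perm (Fin (2 * n))
  arcs_invol : ∀ i, arcs (arcs i) = i
  arcs_noncrossing : Noncrossing arcs
  /-- the transversal arc has exactly two anchored ends -/
  two_free_ends : Nat.card {p // arcs p = p} = 2
  /-- the arcs glue up into a single transversal arc through all the crossings -/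
  single_arc : ∀ i j : Fin (2 * n),
    Relation.ReflTransGen
      (fun a b => (arcs a = b ∧ a ≠ b) ∨ crossingOf n a = crossingOf n b) i j

/-- The number of crossings of a doubly-anchored open semi-meander. -/
def DoublyAnchoredOpenSemiMeander.crossings (M : DoublyAnchoredOpenSemiMeander) : ℕ := M.n

/-- The multiset of orders of the zeros carried by the complementary regions of a
doubly-anchored open semi-meander, together with one simple pole for each of the
four anchor points (valence-one vertices). -/
noncomputable def DoublyAnchoredOpenSemiMeander.orders
    (M : DoublyAnchoredOpenSemiMeander) : Multiset ℤ :=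
  faceOrders M.arcs + Multiset.replicate 4 (-1)

/-- The doubly-anchored open semi-meander lies in the genus-zero stratum `Q(K)`. -/
def DoublyAnchoredOpenSemiMeander.InStratum (M : DoublyAnchoredOpenSemiMeander)
    (K : Multiset ℤ) : Prop :=
  MatchesStratum M.orders K

/-!
A doubly-anchored open semi-meander with `n` crossings has `2n` half-edges, two of them free, hence
`n - 1` arcs and `n` complementary regions in the cut-open disk. Together with the four anchor
poles these carry all orders of the stratum, zeros of order `0` included, so
`n + 4 ≥ (k₁ + k₂ + 4) + 2`.

For `k₂ = k` and `k₁ = k + d` the bound is attained by the half-edge word `( ()ᵃ * ()ᵇ ) * ()ᵏ`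
(arcs as brackets, free ends as `*`) with `a = k + ⌈d/2⌉` and `b = ⌊d/2⌋`: the region under the
long arc has `a + b` children and one free end, so it is a zero of order `k₁`; the outer region has
`k + 1` arcs and one free end, a zero of order `k₂`; all other regions are bigons. The inner free
end sits on the central crossing `0`, and the transversal runs from there through the crossings
`1, …, d`, along the long arc to the crossing `n - 1`, and back down through `n - 2, …, d + 1`;
so it is a single arc.
-/

open Finset

theorem card_filter_ne_add_count {α : Type*} [DecidableEq α] (s : Multiset α) (a : α) :
    Multiset.card (s.filter (· ≠ a)) + s.count a = Multiset.card s := by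
  rw [Multiset.count_eq_card_filter_eq, ← Multiset.card_add]
  conv_rhs => rw [← Multiset.filter_add_not (· ≠ a) s]
  simp only [ne_eq, not_not, eq_comm]

theorem card_le_card_of_matchesStratum {orders K : Multiset ℤ} (h : MatchesStratum orders K) :
    Multiset.card K ≤ Multiset.card orders := by
  rw [← card_filter_ne_add_count K 0, ← card_filter_ne_add_count orders 0, h.1]
  exact Nat.add_le_add_left h.2 _

theorem two_mul_card_filter_lt_add_card_filter_eq {α : Type*} [LinearOrder α] {f : α → α}
    (hf : Function.Involutive f) (s : Finset α) (hs : ∀ x ∈ s, f x ∈ s) :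
    2 * #{x ∈ s | x < f x} + #{x ∈ s | f x = x} = #s := by
  have hswap : #{x ∈ s | x < f x} = #{x ∈ s | f x < x} :=
    card_nbij' f f (fun x hx => by simp_all [hf x]) (fun x hx => by simp_all [hf x])
      (fun x _ => hf x) (fun x _ => hf x)
  have hsplit : #{x ∈ s | ¬ x < f x} = #{x ∈ s | f x < x} + #{x ∈ s | f x = x} := by
    rw [← card_union_of_disjoint (disjoint_filter.2 fun x _ h h' => h.ne h')]
    congr 1
    ext x
    simp [le_iff_lt_or_eq, and_or_left]
  have := card_filter_add_card_filter_not (s := s) (fun x => x < f x)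
  omega

theorem card_filter_lt_of_two_fixedPoints {m : ℕ} (f : Equiv.Perm (Fin m))
    (hf : ∀ i, f (f i) = i) (hfix : Nat.card {p // f p = p} = 2) :
    2 * #{i | i < f i} + 2 = m := by
  rw [Nat.card_eq_fintype_card, Fintype.card_subtype] at hfix
  simpa [hfix] using two_mul_card_filter_lt_add_card_filter_eq hf univ (by simp)

theorem card_faceOrders {m : ℕ} (f : Equiv.Perm (Fin m)) :
    Multiset.card (faceOrders f) = #{i | i < f i} + 1 := by
  simp [faceOrders, arcOrders, Finset.card_def]

theorem DoublyAnchoredOpenSemiMeander.card_orders (M : DoublyAnchoredOpenSemiMeander) :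
    Multiset.card M.orders = M.crossings + 4 := by
  have := card_filter_lt_of_two_fixedPoints M.arcs M.arcs_invol M.two_free_ends
  rw [orders, Multiset.card_add, card_faceOrders, Multiset.card_replicate, crossings]
  omega

theorem DoublyAnchoredOpenSemiMeander.card_le_crossings_add_four
    (M : DoublyAnchoredOpenSemiMeander) {K : Multiset ℤ} (hM : M.InStratum K) :
    Multiset.card K ≤ M.crossings + 4 :=
  M.card_orders ▸ card_le_card_of_matchesStratum hM

theorem crossingOf_rev {n : ℕ} (p : Fin (2 * n)) : crossingOf n p.rev = crossingOf n p := by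
  have := p.2
  simp only [crossingOf, Fin.val_rev]
  split_ifs <;> omega

theorem single_arc_of_descent {n : ℕ} (f : Equiv.Perm (Fin (2 * n))) (hf : ∀ i, f (f i) = i)
    (φ : ℕ → ℕ)
    (hdesc : ∀ p, crossingOf n p ≠ 0 → ∃ q, crossingOf n q = crossingOf n p ∧ f q ≠ q ∧
      φ (crossingOf n (f q)) < φ (crossingOf n p))
    (i j : Fin (2 * n)) :
    Relation.ReflTransGen (fun a b => (f a = b ∧ a ≠ b) ∨ crossingOf n a = crossingOf n b) i j := by
  set r := fun a b => (f a = b ∧ a ≠ b) ∨ crossingOf n a = crossingOf n b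
  have : Std.Symm r := ⟨fun a b => by
    rintro (⟨rfl, hab⟩ | hab)
    exacts [.inl ⟨hf a, hab.symm⟩, .inr hab.symm]⟩
  have reach : ∀ p z, crossingOf n z = 0 → Relation.ReflTransGen r p z := by
    intro p z hz
    induction hφ : φ (crossingOf n p) using Nat.strong_induction_on generalizing p with
    | _ v ih =>
    by_cases hp : crossingOf n p = 0
    · exact .single (.inr (hp.trans hz.symm))
    · obtain ⟨q, hq, hfq, hlt⟩ := hdesc p hp
      exact .head (.inr hq.symm) (.head (.inl ⟨rfl, hfq.symm⟩) (ih _ (hφ ▸ hlt) _ rfl))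
  have hn : n < 2 * n := by have := i.2; omega
  have hz : crossingOf n ⟨n, hn⟩ = 0 := by simp [crossingOf]
  exact (reach i _ hz).trans (Std.Symm.symm _ _ (reach j _ hz))

/-- The word `( ()ᵃ * ()ᵇ ) * ()ᵏ` of the header, on `n = 2k + d + 2` crossings. Its inner free
end `2a + 1` is whichever of the two central positions `n - 1`, `n` is odd. -/
def longArc (k d p : ℕ) : ℕ :=
  if p = 0 then 2 * k + 2 * d + 2
  else if p = 2 * k + 2 * d + 2 then 0
  else if p = 2 * (k + (d + 1) / 2) + 1 ∨ p = 2 * k + 2 * d + 3 then p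
  else if (p < 2 * (k + (d + 1) / 2) + 1 ↔ p % 2 = 1) then p + 1
  else p - 1

section LongArc

variable {k d p : ℕ}

theorem longArc_lt (hp : p < 2 * (2 * k + d + 2)) : longArc k d p < 2 * (2 * k + d + 2) := by
  unfold longArc
  split_ifs <;> omega

theorem longArc_longArc (hp : p < 2 * (2 * k + d + 2)) : longArc k d (longArc k d p) = p := by
  unfold longArc
  split_ifs <;> first | omega | contradiction

theorem longArc_cases (hp : p < 2 * (2 * k + d + 2)) :
    (p = 0 ∧ longArc k d p = 2 * k + 2 * d + 2) ∨ (p = 2 * k + 2 * d + 2 ∧ longArc k d p = 0) ∨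
    ((p = 2 * (k + (d + 1) / 2) + 1 ∨ p = 2 * k + 2 * d + 3) ∧ longArc k d p = p) ∨
    (p ≠ 0 ∧ p ≠ 2 * k + 2 * d + 2 ∧ p ≠ 2 * k + 2 * d + 3 ∧ p ≠ 2 * (k + (d + 1) / 2) + 1 ∧
      (longArc k d p = p + 1 ∨ longArc k d p + 1 = p) ∧ longArc k d p ≠ 0 ∧
      (p < 2 * k + 2 * d + 2 ↔ longArc k d p < 2 * k + 2 * d + 2)) := by
  unfold longArc
  split_ifs <;> omega

theorem longArc_zero : longArc k d 0 = 2 * k + 2 * d + 2 := by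
  simp [longArc]

end LongArc

def longArcPerm (k d : ℕ) : Equiv.Perm (Fin (2 * (2 * k + d + 2))) :=
  Function.Involutive.toPerm (fun p => ⟨longArc k d p, longArc_lt p.2⟩)
    fun p => Fin.ext (longArc_longArc p.2)

@[simp]
theorem longArcPerm_val (k d : ℕ) (p : Fin (2 * (2 * k + d + 2))) :
    (longArcPerm k d p : ℕ) = longArc k d p := rfl

/-- The distance from the crossing `c` to the central crossing `0` along the transversal of
`longArcMeander k d`. -/
def longArcPotential (k d c : ℕ) : ℕ := if c ≤ d then c else 2 * k + 2 * d + 2 - c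

section LongArcPerm

variable {k d : ℕ}

theorem longArcPerm_involutive : Function.Involutive (longArcPerm k d) :=
  fun p => Fin.ext (longArc_longArc p.2)

theorem isFree_longArcPerm_iff (p : Fin (2 * (2 * k + d + 2))) :
    IsFree (longArcPerm k d) p ↔
      (p : ℕ) = 2 * (k + (d + 1) / 2) + 1 ∨ (p : ℕ) = 2 * k + 2 * d + 3 := by
  have := longArc_cases p.2
  simp only [IsFree, Fin.ext_iff, longArcPerm_val]
  omega

theorem covers_longArcPerm_iff (i p : Fin (2 * (2 * k + d + 2))) :
    Covers (longArcPerm k d) i p ↔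
      (i : ℕ) = 0 ∧ 0 < (p : ℕ) ∧ (p : ℕ) < 2 * k + 2 * d + 2 := by
  have := longArc_cases i.2
  simp only [Covers, IsArc, Fin.lt_def, longArcPerm_val]
  omega

theorem nests_longArcPerm_iff (j i : Fin (2 * (2 * k + d + 2))) :
    Nests (longArcPerm k d) j i ↔
      (j : ℕ) = 0 ∧ 0 < (i : ℕ) ∧ (i : ℕ) < 2 * k + 2 * d + 2 ∧ i < longArcPerm k d i := by
  have := longArc_cases i.2
  have := longArc_cases j.2
  simp only [Nests, IsArc, Fin.lt_def, longArcPerm_val]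
  omega

theorem longArcPerm_noncrossing : Noncrossing (longArcPerm k d) := by
  rintro ⟨i, j, hij, hji, hfij⟩
  have := longArc_cases i.2
  have := longArc_cases j.2
  simp only [Fin.lt_def, longArcPerm_val] at hij hji hfij
  omega

theorem directChild_longArcPerm_iff (i j : Fin (2 * (2 * k + d + 2))) :
    DirectChild (longArcPerm k d) i j ↔ Nests (longArcPerm k d) i j := by
  refine ⟨And.left, fun h => ⟨h, fun a hia haj => ?_⟩⟩
  rw [nests_longArcPerm_iff] at hia haj
  omega

theorem freeEndUnder_longArcPerm_iff (i p : Fin (2 * (2 * k + d + 2))) :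
    FreeEndUnder (longArcPerm k d) i p ↔
      (i : ℕ) = 0 ∧ (p : ℕ) = 2 * (k + (d + 1) / 2) + 1 := by
  simp only [FreeEndUnder, isFree_longArcPerm_iff, covers_longArcPerm_iff,
    nests_longArcPerm_iff]
  constructor
  · omega
  · rintro ⟨hi, hp⟩
    exact ⟨by omega, ⟨hi, by omega, by omega⟩, fun b _ hb => by omega⟩

theorem isTop_longArcPerm_iff (i : Fin (2 * (2 * k + d + 2))) :
    IsTop (longArcPerm k d) i ↔
      i < longArcPerm k d i ∧ ((i : ℕ) = 0 ∨ 2 * k + 2 * d + 2 < (i : ℕ)) := by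
  have := longArc_cases i.2
  simp only [IsTop, IsArc, nests_longArcPerm_iff]
  constructor
  · rintro ⟨hi, hnest⟩
    have := hnest ⟨0, by omega⟩
    simp only [Fin.lt_def, longArcPerm_val, true_and] at hi this ⊢
    omega
  · rintro ⟨hi, hpos⟩
    refine ⟨hi, fun j hj => ?_⟩
    simp only [Fin.lt_def, longArcPerm_val] at hi hj
    omega

theorem freeEndOutside_longArcPerm_iff (p : Fin (2 * (2 * k + d + 2))) :
    FreeEndOutside (longArcPerm k d) p ↔ (p : ℕ) = 2 * k + 2 * d + 3 := by
  simp only [FreeEndOutside, isFree_longArcPerm_iff, covers_longArcPerm_iff]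
  constructor
  · rintro ⟨hp, hcov⟩
    have := hcov ⟨0, by omega⟩
    simp only [true_and] at this
    omega
  · intro hp
    exact ⟨.inr hp, fun b hb => by omega⟩

theorem card_filter_lt_longArcPerm_inside :
    #{i ∈ Ioo 0 (longArcPerm k d 0) | i < longArcPerm k d i} = k + d := by
  have h := two_mul_card_filter_lt_add_card_filter_eq (longArcPerm_involutive (k := k) (d := d))
    (Ioo 0 (longArcPerm k d 0)) fun x hx => by
      have := longArc_cases x.2
      simp only [mem_Ioo, Fin.lt_def, longArcPerm_val, Fin.val_zero, longArc_zero] at hx ⊢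
      omega
  have hfix : #{i ∈ Ioo 0 (longArcPerm k d 0) | longArcPerm k d i = i} = 1 :=
    card_eq_one.2 ⟨⟨2 * (k + (d + 1) / 2) + 1, by omega⟩, by
      ext x
      have := longArc_cases x.2
      simp only [mem_filter, mem_Ioo, mem_singleton, Fin.lt_def, Fin.ext_iff, longArcPerm_val,
        Fin.val_zero, longArc_zero]
      omega⟩
  rw [hfix, Fin.card_Ioo] at h
  simp only [longArcPerm_val, Fin.val_zero, longArc_zero] at h
  omega

theorem card_filter_lt_longArcPerm_outside :
    #{i ∈ Ioi (longArcPerm k d 0) | i < longArcPerm k d i} = k := by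
  have h := two_mul_card_filter_lt_add_card_filter_eq (longArcPerm_involutive (k := k) (d := d))
    (Ioi (longArcPerm k d 0)) fun x hx => by
      have := longArc_cases x.2
      simp only [mem_Ioi, Fin.lt_def, longArcPerm_val, Fin.val_zero, longArc_zero] at hx ⊢
      omega
  have hfix : #{i ∈ Ioi (longArcPerm k d 0) | longArcPerm k d i = i} = 1 :=
    card_eq_one.2 ⟨⟨2 * k + 2 * d + 3, by omega⟩, by
      ext x
      have := longArc_cases x.2
      simp only [mem_filter, mem_Ioi, mem_singleton, Fin.lt_def, Fin.ext_iff, longArcPerm_val,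
        Fin.val_zero, longArc_zero]
      omega⟩
  rw [hfix, Fin.card_Ioi] at h
  simp only [longArcPerm_val, Fin.val_zero, longArc_zero] at h
  omega

theorem arcOrder_longArcPerm_zero : arcOrder (longArcPerm k d) 0 = k + d := by
  have hchildren : Nat.card {j // DirectChild (longArcPerm k d) 0 j} = k + d := by
    refine (Nat.subtype_card _ fun j => ?_).trans card_filter_lt_longArcPerm_inside
    simp only [mem_filter, mem_Ioo, directChild_longArcPerm_iff, nests_longArcPerm_iff,
      Fin.lt_def, longArcPerm_val, Fin.val_zero, longArc_zero, true_and, and_assoc]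
  have hfree : Nat.card {p // FreeEndUnder (longArcPerm k d) 0 p} = 1 :=
    (Nat.subtype_card {⟨2 * (k + (d + 1) / 2) + 1, by omega⟩} fun p => by
      simp [freeEndUnder_longArcPerm_iff, Fin.ext_iff]).trans (card_singleton _)
  rw [arcOrder, hchildren, hfree]
  push_cast
  ring

theorem arcOrder_longArcPerm_of_ne_zero {i : Fin (2 * (2 * k + d + 2))} (hi : i ≠ 0) :
    arcOrder (longArcPerm k d) i = -1 := by
  have hi := Fin.val_ne_zero_iff.2 hi
  have hchildren : Nat.card {j // DirectChild (longArcPerm k d) i j} = 0 :=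
    Nat.subtype_card ∅ fun j => by
      simp only [notMem_empty, false_iff, directChild_longArcPerm_iff, nests_longArcPerm_iff]
      omega
  have hfree : Nat.card {p // FreeEndUnder (longArcPerm k d) i p} = 0 :=
    Nat.subtype_card ∅ fun p => by
      simp only [notMem_empty, false_iff, freeEndUnder_longArcPerm_iff]
      omega
  simp [arcOrder, hchildren, hfree]

theorem outerOrder_longArcPerm : outerOrder (longArcPerm k d) = k := by
  have h0 : (0 : Fin (2 * (2 * k + d + 2))) ∉
      {i ∈ Ioi (longArcPerm k d 0) | i < longArcPerm k d i} := by
    simp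
  have htops : Nat.card {i // IsTop (longArcPerm k d) i} = k + 1 := by
    refine (Nat.subtype_card (insert 0 {i ∈ Ioi (longArcPerm k d 0) | i < longArcPerm k d i})
      fun i => ?_).trans ?_
    · have := longArc_cases i.2
      simp only [mem_insert, mem_filter, mem_Ioi, isTop_longArcPerm_iff, Fin.ext_iff, Fin.lt_def,
        longArcPerm_val, Fin.val_zero, longArc_zero]
      omega
    · rw [card_insert_of_notMem h0, card_filter_lt_longArcPerm_outside]
  have hfree : Nat.card {p // FreeEndOutside (longArcPerm k d) p} = 1 :=
    (Nat.subtype_card {⟨2 * k + 2 * d + 3, by omega⟩} fun p => by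
      simp [freeEndOutside_longArcPerm_iff, Fin.ext_iff]).trans (card_singleton _)
  rw [outerOrder, htops, hfree]
  push_cast
  ring

theorem card_fixedPoints_longArcPerm : Nat.card {p // longArcPerm k d p = p} = 2 :=
  (Nat.subtype_card {⟨2 * (k + (d + 1) / 2) + 1, by omega⟩, ⟨2 * k + 2 * d + 3, by omega⟩}
    fun p => by
      simp only [mem_insert, mem_singleton, Fin.ext_iff]
      exact (isFree_longArcPerm_iff p).symm.trans Fin.ext_iff).trans
    (card_pair (by simp [Fin.ext_iff]; omega))

theorem faceOrders_longArcPerm :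
    faceOrders (longArcPerm k d) =
      (k : ℤ) ::ₘ (k + d : ℤ) ::ₘ Multiset.replicate (2 * k + d) (-1) := by
  have h0 : 0 ∈ ({i | i < longArcPerm k d i} : Finset (Fin (2 * (2 * k + d + 2)))) := by
    simp [Fin.lt_def, longArc_zero]
  have hcard := card_filter_lt_of_two_fixedPoints (longArcPerm k d)
    (fun i => longArcPerm_involutive i) card_fixedPoints_longArcPerm
  rw [faceOrders, outerOrder_longArcPerm, arcOrders, ← insert_erase h0,
    insert_val_of_notMem (notMem_erase 0 _), Multiset.map_cons, arcOrder_longArcPerm_zero]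
  refine congrArg _ (congrArg _ (Multiset.eq_replicate.2 ⟨?_, fun b hb => ?_⟩))
  · rw [Multiset.card_map, card_val, card_erase_of_mem h0]
    omega
  · obtain ⟨i, hi, rfl⟩ := Multiset.mem_map.1 hb
    exact arcOrder_longArcPerm_of_ne_zero (Finset.ne_of_mem_erase (Finset.mem_def.2 hi))

theorem longArcPerm_descent_of_parity (q : Fin (2 * (2 * k + d + 2)))
    (hq : crossingOf _ q ≠ 0) (hpar : (q : ℕ) % 2 = 1 ↔ crossingOf _ q ≤ d) :
    longArcPerm k d q ≠ q ∧ longArcPotential k d (crossingOf _ (longArcPerm k d q)) <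
      longArcPotential k d (crossingOf _ q) := by
  have := q.2
  simp only [ne_eq, Fin.ext_iff, longArcPerm_val, crossingOf, longArcPotential] at hq hpar ⊢
  unfold longArc
  split_ifs at hq hpar ⊢ <;> omega

/-- Of the two half-edges `p`, `p.rev` at a crossing, the transversal leaves towards the central
crossing through the odd one on the crossings `1, …, d` and through the even one beyond. -/
theorem longArcPerm_descent (p : Fin (2 * (2 * k + d + 2))) (hp : crossingOf _ p ≠ 0) :
    ∃ q, crossingOf _ q = crossingOf _ p ∧ longArcPerm k d q ≠ q ∧
      longArcPotential k d (crossingOf _ (longArcPerm k d q)) <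
        longArcPotential k d (crossingOf _ p) := by
  by_cases hpar : (p : ℕ) % 2 = 1 ↔ crossingOf _ p ≤ d
  · exact ⟨p, rfl, longArcPerm_descent_of_parity p hp hpar⟩
  · refine ⟨p.rev, crossingOf_rev p, ?_⟩
    rw [← crossingOf_rev p] at hp hpar ⊢
    refine longArcPerm_descent_of_parity p.rev hp ?_
    have := p.2
    rw [Fin.val_rev]
    omega

end LongArcPerm

def longArcMeander (k d : ℕ) : DoublyAnchoredOpenSemiMeander where
  n := 2 * k + d + 2
  arcs := longArcPerm k d
  arcs_invol := longArcPerm_involutive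
  arcs_noncrossing := longArcPerm_noncrossing
  two_free_ends := card_fixedPoints_longArcPerm
  single_arc := single_arc_of_descent _ longArcPerm_involutive _ longArcPerm_descent

theorem longArcMeander_orders (k d : ℕ) :
    (longArcMeander k d).orders =
      ((k + d : ℕ) : ℤ) ::ₘ (k : ℤ) ::ₘ Multiset.replicate (k + d + k + 4) (-1) := by
  rw [DoublyAnchoredOpenSemiMeander.orders, longArcMeander, faceOrders_longArcPerm,
    Multiset.cons_add, Multiset.cons_add, ← Multiset.replicate_add, Multiset.cons_swap,
    show k + d + k + 4 = 2 * k + d + 4 by omega, Nat.cast_add]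

/-- **Proposition 4.5.**  For all integers `k₁ ≥ k₂ ≥ 0`, the minimum number of
crossings among all doubly-anchored open semi-meanders lying in the genus-zero
stratum `Q(k₁, k₂, -1^{k₁+k₂+4})` is exactly `k₁ + k₂ + 2`. -/
theorem min_crossings_doublyAnchoredOpenSemiMeander (k₁ k₂ : ℕ) (h : k₂ ≤ k₁) :
    IsLeast {c : ℕ | ∃ M : DoublyAnchoredOpenSemiMeander,
        M.InStratum ((k₁ : ℤ) ::ₘ (k₂ : ℤ) ::ₘ Multiset.replicate (k₁ + k₂ + 4) (-1 : ℤ)) ∧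
        M.crossings = c}
      (k₁ + k₂ + 2) := by
  refine ⟨?_, ?_⟩
  · obtain ⟨d, rfl⟩ := Nat.exists_eq_add_of_le h
    refine ⟨longArcMeander k₂ d, ?_, ?_⟩
    · rw [DoublyAnchoredOpenSemiMeander.InStratum, longArcMeander_orders]
      exact ⟨rfl, le_rfl⟩
    · simp only [DoublyAnchoredOpenSemiMeander.crossings, longArcMeander]
      omega
  · rintro c ⟨M, hM, rfl⟩
    have := M.card_le_crossings_add_four hM
    simp only [Multiset.card_cons, Multiset.card_replicate] at this
    omega

end PaperMeanders
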